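/- Let f : ℝⁿ × ℝᵐ → ℝⁿ, φ : ℝⁿ × ℝᵐ → ℝᵏ, and L : ℝⁿ × ℝᵐ → ℝ be continuously differentiable. Suppose q₀, q₁, p₀, p₁ ∈ ℝⁿ and internal stages Qⁱ, Pⁱ ∈ ℝⁿ, Uⁱ ∈ ℝᵐ, Λⁱ ∈ ℝᵏ (i = 1,…,s) satisfy: q₁ = q₀ + Δt·Σᵢ bᵢ f(Qⁱ,Uⁱ); Qⁱ = q₀ + Δt·Σⱼ aᵢⱼ f(Qʲ,Uʲ); p₁ = p₀ − Δt·Σᵢ bᵢ ( D_qf(Qⁱ,Uⁱ)ᵀ Pⁱ + D_qφ(Qⁱ,Uⁱ)ᵀ Λⁱ + ∇_qL(Qⁱ,Uⁱ) ); Pⁱ = p₀ − Δt·Σⱼ ãᵢⱼ ( D_qf(Qʲ,Uʲ)ᵀ Pʲ + D_qφ(Qʲ,Uʲ)ᵀ Λʲ + ∇_qL(Qʲ,Uʲ) ); 0 = φ(Qⁱ,Uⁱ); 0 = D_uf(Qⁱ,Uⁱ)ᵀ Pⁱ + D_uφ(Qⁱ,Uⁱ)ᵀ Λⁱ + ∇_uL(Qⁱ,Uⁱ).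 Suppose further that δq₀, δq₁, δQⁱ ∈ ℝⁿ and δUⁱ ∈ ℝᵐ satisfy: δq₁ = δq₀ + Δt·Σᵢ bᵢ ( D_qf(Qⁱ,Uⁱ) δQⁱ + D_uf(Qⁱ,Uⁱ) δUⁱ ); δQⁱ = δq₀ + Δt·Σⱼ aᵢⱼ ( D_qf(Qʲ,Uʲ) δQʲ + D_uf(Qʲ,Uʲ) δUʲ ); 0 = D_qφ(Qⁱ,Uⁱ) δQⁱ + D_uφ(Qⁱ,Uⁱ) δUⁱ. Then ⟨p₁, δq₁⟩ = ⟨p₀, δq₀⟩ − Δt·Σᵢ bᵢ ( ⟨∇_qL(Qⁱ,Uⁱ), δQⁱ⟩ + ⟨∇_uL(Qⁱ,Uⁱ), δUⁱ⟩ ). -/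

import Mathlib

open scoped RealInnerProductSpace

noncomputable section

abbrev Euc (n : ℕ) : Type := EuclideanSpace ℝ (Fin n)

/-- Partial Jacobian `D_qF(q,u)` with respect to the first argument. -/
noncomputable def Dq {n m k : ℕ} (F : Euc n × Euc m → Euc k) (q : Euc n) (u : Euc m) :
    Euc n →L[ℝ] Euc k :=
  fderiv ℝ (fun q' => F (q', u)) q

/-- Partial Jacobian `D_uF(q,u)` with respect to the second argument. -/
noncomputable def Du {n m k : ℕ} (F : Euc n × Euc m → Euc k) (q : Euc n) (u : Euc m) :
    Euc m →L[ℝ] Euc k :=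
  fderiv ℝ (fun u' => F (q, u')) u

/-- `D_qF(q,u)ᵀ`, the transpose (adjoint) of the partial Jacobian in `q`. -/
noncomputable def DqT {n m k : ℕ} (F : Euc n × Euc m → Euc k) (q : Euc n) (u : Euc m) :
    Euc k →L[ℝ] Euc n :=
  ContinuousLinearMap.adjoint (Dq F q u)

/-- `D_uF(q,u)ᵀ`, the transpose (adjoint) of the partial Jacobian in `u`. -/
noncomputable def DuT {n m k : ℕ} (F : Euc n × Euc m → Euc k) (q : Euc n) (u : Euc m) :
    Euc k →L[ℝ] Euc m :=
  ContinuousLinearMap.adjoint (Du F q u)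

/-- Partial gradient `∇_qL(q,u)`. -/
noncomputable def gradQ {n m : ℕ} (L : Euc n × Euc m → ℝ) (q : Euc n) (u : Euc m) : Euc n :=
  gradient (fun q' => L (q', u)) q

/-- Partial gradient `∇_uL(q,u)`. -/
noncomputable def gradU {n m : ℕ} (L : Euc n × Euc m → ℝ) (q : Euc n) (u : Euc m) : Euc m :=
  gradient (fun u' => L (q, u')) u

/-! The identity is the discrete analogue of `d/dt ⟪p, δq⟫ = -(⟪∇_qL, δq⟫ + ⟪∇_uL, δu⟫)`.
Expanding `⟪p₁, δq₁⟫` bilinearly, the symplectic condition `bᵢ ãᵢⱼ + bⱼ aⱼᵢ = bᵢ bⱼ` makes the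
`Δt²` double sum cancel against the internal stage equations, which leaves
`⟪p₀, δq₀⟫ + Δt Σᵢ bᵢ (⟪Pⁱ, δFⁱ⟫ - ⟪Gⁱ, δQⁱ⟫)`, with `Gⁱ` the momentum slope and `δFⁱ` the
linearized velocity. Transposing the Jacobians, the stationarity of `H_L` in `u` and the
linearized constraint turn each stage term into `-(⟪∇_qL, δQⁱ⟫ + ⟪∇_uL, δUⁱ⟫)`. -/

section PartitionedRungeKutta

variable {R M N ι : Type*} [CommRing R] [AddCommGroup M] [Module R M] [AddCommGroup N]
  [Module R N] [Fintype ι]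

theorem sum_mul_mul_eq_of_symplectic {a a' : ι → ι → R} {b : ι → R}
    (hsym : ∀ i j, b i * a' i j + b j * a j i = b i * b j) (c : ι → ι → R) :
    ∑ i, ∑ j, b i * b j * c i j
      = ∑ i, ∑ j, b i * a' i j * c i j + ∑ i, ∑ j, b i * a i j * c j i := by
  rw [Finset.sum_comm (f := fun i j => b i * a i j * c j i), ← Finset.sum_add_distrib]
  refine Finset.sum_congr rfl fun i _ => ?_
  rw [← Finset.sum_add_distrib]
  refine Finset.sum_congr rfl fun j _ => ?_
  linear_combination (-c i j) * hsym i j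

theorem LinearMap.apply_partitionedRK_step (B : M →ₗ[R] N →ₗ[R] R) (h : R)
    {a a' : ι → ι → R} {b : ι → R} (hsym : ∀ i j, b i * a' i j + b j * a j i = b i * b j)
    {p₀ p₁ : M} {x₀ x₁ : N} {P G : ι → M} {X F : ι → N}
    (hp₁ : p₁ = p₀ - h • ∑ i, b i • G i) (hP : ∀ i, P i = p₀ - h • ∑ j, a' i j • G j)
    (hx₁ : x₁ = x₀ + h • ∑ i, b i • F i) (hX : ∀ i, X i = x₀ + h • ∑ j, a i j • F j) :
    B p₁ x₁ = B p₀ x₀ + h * ∑ i, b i * (B (P i) (F i) - B (G i) (X i)) := by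
  have key := congrArg (h * h * ·)
    (sum_mul_mul_eq_of_symplectic hsym fun i j => B (G j) (F i))
  simp only [mul_add, Finset.mul_sum] at key
  simp only [hp₁, hx₁, hP, hX, map_add, map_sub, map_sum, map_smul, LinearMap.sub_apply,
    LinearMap.sum_apply, LinearMap.smul_apply, smul_eq_mul, Finset.mul_sum, mul_sub, mul_add,
    Finset.sum_sub_distrib, Finset.sum_add_distrib]
  linear_combination (norm := ring_nf) -key

end PartitionedRungeKutta

open ContinuousLinearMap in
theorem inner_linearization_sub_inner_adjoint_eq {E V F K : Type*}
    [NormedAddCommGroup E] [InnerProductSpace ℝ E] [CompleteSpace E]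
    [NormedAddCommGroup V] [InnerProductSpace ℝ V] [CompleteSpace V]
    [NormedAddCommGroup F] [InnerProductSpace ℝ F] [CompleteSpace F]
    [NormedAddCommGroup K] [InnerProductSpace ℝ K] [CompleteSpace K]
    (Aq : E →L[ℝ] F) (Au : V →L[ℝ] F) (Cq : E →L[ℝ] K) (Cu : V →L[ℝ] K)
    {p : F} {l : K} {gq : E} {gu : V} {x : E} {y : V}
    (hstat : adjoint Au p + adjoint Cu l + gu = 0) (hlin : Cq x + Cu y = 0) :
    ⟪p, Aq x + Au y⟫ - ⟪adjoint Aq p + adjoint Cq l + gq, x⟫ = -(⟪gq, x⟫ + ⟪gu, y⟫) := by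
  have hstat_y : ⟪adjoint Au p + adjoint Cu l + gu, y⟫ = 0 := by rw [hstat, inner_zero_left]
  have hlin_l : ⟪l, Cq x + Cu y⟫ = 0 := by rw [hlin, inner_zero_right]
  simp only [inner_add_left, inner_add_right, adjoint_inner_left] at hstat_y hlin_l ⊢
  linarith

theorem discrete_augmented_adjoint_DAE_quadratic_identity_general {n m k s : ℕ}
    (f : Euc n × Euc m → Euc n) (φ : Euc n × Euc m → Euc k) (L : Euc n × Euc m → ℝ)
    (Δt : ℝ)
    (a a' : Fin s → Fin s → ℝ) (b : Fin s → ℝ)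
    (hsym : ∀ i j, b i * a' i j + b j * a j i = b i * b j)
    (p₀ p₁ : Euc n) (Q P : Fin s → Euc n) (U : Fin s → Euc m) (Λ : Fin s → Euc k)
    (hp1 : p₁ = p₀ - Δt • ∑ i, b i •
      (DqT f (Q i) (U i) (P i) + DqT φ (Q i) (U i) (Λ i) + gradQ L (Q i) (U i)))
    (hP : ∀ i, P i = p₀ - Δt • ∑ j, a' i j •
      (DqT f (Q j) (U j) (P j) + DqT φ (Q j) (U j) (Λ j) + gradQ L (Q j) (U j)))
    (hadj : ∀ i, DuT f (Q i) (U i) (P i) + DuT φ (Q i) (U i) (Λ i)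
      + gradU L (Q i) (U i) = 0)
    (δq₀ δq₁ : Euc n) (δQ : Fin s → Euc n) (δU : Fin s → Euc m)
    (hδq1 : δq₁ = δq₀ + Δt • ∑ i, b i •
      (Dq f (Q i) (U i) (δQ i) + Du f (Q i) (U i) (δU i)))
    (hδQ : ∀ i, δQ i = δq₀ + Δt • ∑ j, a i j •
      (Dq f (Q j) (U j) (δQ j) + Du f (Q j) (U j) (δU j)))
    (hδconstr : ∀ i, Dq φ (Q i) (U i) (δQ i) + Du φ (Q i) (U i) (δU i) = 0) :
    ⟪p₁, δq₁⟫ = ⟪p₀, δq₀⟫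
      - Δt * ∑ i, b i * (⟪gradQ L (Q i) (U i), δQ i⟫ + ⟪gradU L (Q i) (U i), δU i⟫) := by
  have stage i := inner_linearization_sub_inner_adjoint_eq (Dq f (Q i) (U i)) (Du f (Q i) (U i))
    (Dq φ (Q i) (U i)) (Du φ (Q i) (U i)) (gq := gradQ L (Q i) (U i)) (hadj i) (hδconstr i)
  refine ((innerₗ (Euc n)).apply_partitionedRK_step Δt hsym hp1 hP hδq1 hδQ).trans ?_
  simp only [innerₗ_apply_apply, DqT, stage, mul_neg, Finset.sum_neg_distrib]
  ring

/-- the presymplectic partitioned Runge–Kutta discretization of the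
augmented adjoint DAE system satisfies the discrete identity
`⟨p₁, δq₁⟩ = ⟨p₀, δq₀⟩ − Δt Σᵢ bᵢ (⟨∇_qL(Qⁱ,Uⁱ), δQⁱ⟩ + ⟨∇_uL(Qⁱ,Uⁱ), δUⁱ⟩)`. -/
theorem discrete_augmented_adjoint_DAE_quadratic_identity {n m k s : ℕ} (hs : 1 ≤ s)
    (f : Euc n × Euc m → Euc n) (φ : Euc n × Euc m → Euc k) (L : Euc n × Euc m → ℝ)
    (hf : ContDiff ℝ 1 f) (hφ : ContDiff ℝ 1 φ) (hL : ContDiff ℝ 1 L)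
    (Δt : ℝ) (hΔt : 0 < Δt)
    (a a' : Fin s → Fin s → ℝ) (b : Fin s → ℝ)
    (hsym : ∀ i j, b i * a' i j + b j * a j i = b i * b j)
    (q₀ q₁ p₀ p₁ : Euc n) (Q P : Fin s → Euc n) (U : Fin s → Euc m) (Λ : Fin s → Euc k)
    (hq1 : q₁ = q₀ + Δt • ∑ i, b i • f (Q i, U i))
    (hQ : ∀ i, Q i = q₀ + Δt • ∑ j, a i j • f (Q j, U j))
    (hp1 : p₁ = p₀ - Δt • ∑ i, b i •
      (DqT f (Q i) (U i) (P i) + DqT φ (Q i) (U i) (Λ i) + gradQ L (Q i) (U i)))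
    (hP : ∀ i, P i = p₀ - Δt • ∑ j, a' i j •
      (DqT f (Q j) (U j) (P j) + DqT φ (Q j) (U j) (Λ j) + gradQ L (Q j) (U j)))
    (hconstr : ∀ i, φ (Q i, U i) = 0)
    (hadj : ∀ i, DuT f (Q i) (U i) (P i) + DuT φ (Q i) (U i) (Λ i)
      + gradU L (Q i) (U i) = 0)
    (δq₀ δq₁ : Euc n) (δQ : Fin s → Euc n) (δU : Fin s → Euc m)
    (hδq1 : δq₁ = δq₀ + Δt • ∑ i, b i •
      (Dq f (Q i) (U i) (δQ i) + Du f (Q i) (U i) (δU i)))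
    (hδQ : ∀ i, δQ i = δq₀ + Δt • ∑ j, a i j •
      (Dq f (Q j) (U j) (δQ j) + Du f (Q j) (U j) (δU j)))
    (hδconstr : ∀ i, Dq φ (Q i) (U i) (δQ i) + Du φ (Q i) (U i) (δU i) = 0) :
    ⟪p₁, δq₁⟫ = ⟪p₀, δq₀⟫
      - Δt * ∑ i, b i * (⟪gradQ L (Q i) (U i), δQ i⟫ + ⟪gradU L (Q i) (U i), δU i⟫) :=
  discrete_augmented_adjoint_DAE_quadratic_identity_general f φ L Δt a a' b hsym p₀ p₁ Q P U Λ hp1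
    hP hadj δq₀ δq₁ δQ δU hδq1 hδQ hδconstr

end
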